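/- Let X be a finite graph. For every vertex x ∈ V, the sum over all edges e with s(e) = x of the projections π(e) vanishes: ∑_{e : s(e) = x} π(e) = 0 in Z₁(X,ℝ). -/

import Mathlib

/-- A graph in the sense of Sunada's topological crystallography: a set of vertices,
a set of edges, source and target maps, and a fixed-point free involution sending
each edge to its inverse. -/
structure SunadaGraph where
  V : Type
  E : Type
  s : E → V
  t : E → V
  inv : E → E
  s_inv : ∀ e, s (inv e) = t e
  t_inv : ∀ e, t (inv e) = s e
  inv_inv : ∀ e, inv (inv e) = e
  inv_ne : ∀ e, inv e ≠ e

namespace SunadaGraph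

variable (X : SunadaGraph)

/-- `X.IsPath x y γ` : the word of edges `γ` is a path from `x` to `y` in `X`. -/
inductive IsPath : X.V → X.V → List X.E → Prop
  | nil (x : X.V) : IsPath x x []
  | cons (e : X.E) {y : X.V} {γ : List X.E} (h : IsPath (X.t e) y γ) :
      IsPath (X.s e) y (e :: γ)

/-- A graph is connected if any two vertices are joined by a path. -/
def Connected : Prop := ∀ x y : X.V, ∃ γ : List X.E, X.IsPath x y γ

/-- An edge is a bridge if there is no path from its target to its source
avoiding both the edge and its inverse. -/
def IsBridge (e : X.E) : Prop :=
  ¬ ∃ γ : List X.E, X.IsPath (X.t e) (X.s e) γ ∧ e ∉ γ ∧ X.inv e ∉ γ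

/-- The space `C₁(X,ℝ)` of real 1-chains: formal linear combinations of edges
with `e⁻¹ = -e`, realized as finitely supported functions `c : E → ℝ` with
`c(e⁻¹) = - c(e)`. -/
noncomputable def C1 : Submodule ℝ (X.E →₀ ℝ) where
  carrier := {c | ∀ e, c (X.inv e) = - c e}
  add_mem' := by
    intro a b ha hb e
    simp only [Finsupp.add_apply, ha e, hb e]
    ring
  zero_mem' := by intro e; simp
  smul_mem' := by
    intro r c hc e
    simp only [Finsupp.smul_apply, hc e, smul_eq_mul]
    ring

/-- The 1-chain associated to a single edge. -/
noncomputable def edgeChain (e : X.E) : ↥X.C1 :=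
  ⟨Finsupp.single e 1 - Finsupp.single (X.inv e) 1, by
    intro f
    classical
    have h1 : (e = X.inv f) ↔ (X.inv e = f) := by
      constructor
      · rintro rfl; exact X.inv_inv f
      · rintro rfl; exact (X.inv_inv e).symm
    have h2 : (X.inv e = X.inv f) ↔ (e = f) := by
      constructor
      · intro h
        have := congrArg X.inv h
        rwa [X.inv_inv, X.inv_inv] at this
      · rintro rfl; rfl
    simp only [Finsupp.sub_apply, Finsupp.single_apply, h1, h2]
    ring⟩

/-- The 1-chain `c_γ` of a path `γ`. -/
noncomputable def pathChain (γ : List X.E) : ↥X.C1 := (γ.map X.edgeChain).sum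

/-- The inner product on `C₁(X,ℝ)` for which the edges form an orthonormal basis
(with `e⁻¹` counting as the negative of `e`). -/
noncomputable def chainInner (c d : ↥X.C1) : ℝ :=
  (1/2) * ((c : X.E →₀ ℝ).sum fun e x => x * (d : X.E →₀ ℝ) e)

/-- The boundary of a 1-chain. -/
noncomputable def boundary (c : ↥X.C1) : X.V →₀ ℝ :=
  (c : X.E →₀ ℝ).sum fun e x => x • (Finsupp.single (X.t e) (1:ℝ) - Finsupp.single (X.s e) 1)

/-- A 1-cycle is a 1-chain with vanishing boundary. -/
def IsCycle (c : ↥X.C1) : Prop := X.boundary c = 0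

/-- An integral 1-chain: all coefficients are integers. -/
def IsIntegral (c : ↥X.C1) : Prop := ∀ e, ∃ n : ℤ, (c : X.E →₀ ℝ) e = (n : ℝ)

/-- The support of a 1-chain: the set of edges with positive coefficient. -/
def chainSupp (c : ↥X.C1) : Set X.E := {e | 0 < (c : X.E →₀ ℝ) e}

/-- `p` is the orthogonal projection of `C₁(X,ℝ)` onto the space `Z₁(X,ℝ)` of 1-cycles:
it takes values in `Z₁(X,ℝ)` and `c - p c` is orthogonal to every 1-cycle. -/
def IsOrthoProj (p : ↥X.C1 → ↥X.C1) : Prop :=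
  (∀ c, X.IsCycle (p c)) ∧ (∀ c z, X.IsCycle z → X.chainInner (c - p c) z = 0)

/-- Two paths from `x` to `y` are homologous if one can be obtained from the other
by repeatedly inserting or deleting subwords `e e⁻¹`, and/or replacing a subword
`στ` by `τσ` where `σ` and `τ` are loops based at the same vertex. -/
inductive Homologous : X.V → X.V → List X.E → List X.E → Prop
  | refl {x y : X.V} (γ : List X.E) (h : X.IsPath x y γ) : Homologous x y γ γ
  | cancel {x y : X.V} (γ δ : List X.E) (e : X.E)
      (h : X.IsPath x y (γ ++ e :: X.inv e :: δ)) (h' : X.IsPath x y (γ ++ δ)) :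
      Homologous x y (γ ++ e :: X.inv e :: δ) (γ ++ δ)
  | swap {x y : X.V} (γ σ τ δ : List X.E) (v : X.V)
      (hσ : X.IsPath v v σ) (hτ : X.IsPath v v τ)
      (h : X.IsPath x y (γ ++ (σ ++ (τ ++ δ))))
      (h' : X.IsPath x y (γ ++ (τ ++ (σ ++ δ)))) :
      Homologous x y (γ ++ (σ ++ (τ ++ δ))) (γ ++ (τ ++ (σ ++ δ)))
  | symm {x y : X.V} {a b : List X.E} (h : Homologous x y a b) : Homologous x y b a
  | trans {x y : X.V} {a b c : List X.E} (h1 : Homologous x y a b)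
      (h2 : Homologous x y b c) : Homologous x y a c

/-- A simple path: no vertex is visited twice. -/
def IsSimplePath (x y : X.V) (γ : List X.E) : Prop :=
  X.IsPath x y γ ∧ (x :: γ.map X.t).Nodup

/-- A simple loop based at `x`: a loop in which every vertex other than `x` occurs
at most once and `x` occurs only as the initial and final vertex. -/
def IsSimpleLoop (x : X.V) (γ : List X.E) : Prop :=
  X.IsPath x x γ ∧ (x :: (γ.map X.t).dropLast).Nodup

/-- A reduced word: no subword of the form `e e⁻¹`. -/
def Reduced (γ : List X.E) : Prop := γ.Chain' (fun a b => b ≠ X.inv a)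

/-- A spanning tree: a set of edges, closed under inversion, such that the spanning
subgraph it determines is connected and has no nonempty reduced loops. -/
def IsSpanningTree (S : Set X.E) : Prop :=
  (∀ e ∈ S, X.inv e ∈ S) ∧
  (∀ x y : X.V, ∃ γ : List X.E, X.IsPath x y γ ∧ ∀ e ∈ γ, e ∈ S) ∧
  (∀ (x : X.V) (γ : List X.E), X.IsPath x x γ → (∀ e ∈ γ, e ∈ S) → X.Reduced γ → γ = [])

/-- The quotient of a set of 1-chains by the translation action of the
integral 1-cycles. -/
def transQuot (S : Set ↥X.C1) : Type :=
  Quot (fun a b : S => ∃ z : ↥X.C1, X.IsCycle z ∧ X.IsIntegral z ∧ (b : ↥X.C1) = (a : ↥X.C1) + z)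

end SunadaGraph

/-! The star of `x` (the chain `∑_{s(e) = x} e`) pairs with a chain `z` to `-(∂z)(x)/2`, so it
is orthogonal to every 1-cycle. Since `π` is the orthogonal projection, the star and
`S = ∑_{s(e) = x} π(e)` have the same inner product with the cycle `S`; hence `⟨S, S⟩ = 0`. -/

namespace SunadaGraph

variable (X : SunadaGraph)

lemma chainInner_add_left (a b d : ↥X.C1) :
    X.chainInner (a + b) d = X.chainInner a d + X.chainInner b d := by
  unfold chainInner
  rw [Submodule.coe_add, Finsupp.sum_add_index' (fun _ => zero_mul _) (fun _ _ _ => add_mul _ _ _),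
    mul_add]

noncomputable def chainInnerLeft (d : ↥X.C1) : ↥X.C1 →+ ℝ :=
  AddMonoidHom.mk' (X.chainInner · d) (X.chainInner_add_left · · d)

lemma chainInner_sub_left (a b d : ↥X.C1) :
    X.chainInner (a - b) d = X.chainInner a d - X.chainInner b d :=
  map_sub (X.chainInnerLeft d) a b

lemma chainInner_sum_ite_left {ι : Type*} [Fintype ι] (p : ι → Prop) [DecidablePred p]
    (f : ι → ↥X.C1) (d : ↥X.C1) :
    X.chainInner (∑ i, if p i then f i else 0) d = ∑ i with p i, X.chainInner (f i) d := by
  rw [← Finset.sum_filter]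
  exact map_sum (X.chainInnerLeft d) f _

lemma chainInner_edgeChain_left (e : X.E) (z : ↥X.C1) :
    X.chainInner (X.edgeChain e) z = (z : X.E →₀ ℝ) e := by
  simp only [chainInner, edgeChain]
  rw [Finsupp.sum_sub_index (fun _ _ _ => sub_mul _ _ _), Finsupp.sum_single_index (zero_mul _),
    Finsupp.sum_single_index (zero_mul _), z.2 e]
  ring

lemma eq_zero_of_chainInner_self_eq_zero {z : ↥X.C1} (h : X.chainInner z z = 0) : z = 0 := by
  have hsum : ∑ e ∈ (z : X.E →₀ ℝ).support, (z : X.E →₀ ℝ) e * (z : X.E →₀ ℝ) e = 0 := by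
    simp only [chainInner, Finsupp.sum] at h
    linarith
  have hsupp : (z : X.E →₀ ℝ).support = ∅ := by
    refine Finset.eq_empty_of_forall_notMem fun e he => Finsupp.mem_support_iff.mp he ?_
    exact mul_self_eq_zero.mp
      ((Finset.sum_eq_zero_iff_of_nonneg fun e _ => mul_self_nonneg _).mp hsum e he)
  exact Subtype.ext (Finsupp.support_eq_empty.mp hsupp)

lemma chainInner_proj_left {π : ↥X.C1 → ↥X.C1} (hπ : X.IsOrthoProj π) (c : ↥X.C1) {z : ↥X.C1}
    (hz : X.IsCycle z) : X.chainInner (π c) z = X.chainInner c z := by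
  have h := hπ.2 c z hz
  rw [chainInner_sub_left] at h
  linarith

lemma boundary_add (a b : ↥X.C1) : X.boundary (a + b) = X.boundary a + X.boundary b := by
  unfold boundary
  exact Finsupp.sum_add_index' (fun _ => zero_smul _ _) (fun _ _ _ => add_smul _ _ _)

lemma isCycle_zero : X.IsCycle 0 :=
  Finsupp.sum_zero_index

lemma isCycle_sum {ι : Type*} (s : Finset ι) (f : ι → ↥X.C1) (h : ∀ i ∈ s, X.IsCycle (f i)) :
    X.IsCycle (∑ i ∈ s, f i) :=
  Finset.sum_induction f X.IsCycle
    (fun a b ha hb => by rw [IsCycle, boundary_add, ha, hb, add_zero]) X.isCycle_zero h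

variable [Fintype X.E] [DecidableEq X.V]

lemma boundary_apply (c : ↥X.C1) (v : X.V) :
    X.boundary c v =
      ∑ e with X.t e = v, (c : X.E →₀ ℝ) e - ∑ e with X.s e = v, (c : X.E →₀ ℝ) e := by
  rw [boundary, Finsupp.sum_apply, Finsupp.sum_fintype _ _ (fun _ => by simp),
    Finset.sum_filter, Finset.sum_filter, ← Finset.sum_sub_distrib]
  refine Finset.sum_congr rfl fun e _ => ?_
  simp only [Finsupp.smul_apply, Finsupp.sub_apply, Finsupp.single_apply, smul_eq_mul]
  split_ifs <;> ring

lemma sum_target_eq_neg_sum_source (c : ↥X.C1) (v : X.V) :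
    ∑ e with X.t e = v, (c : X.E →₀ ℝ) e = -∑ e with X.s e = v, (c : X.E →₀ ℝ) e := by
  rw [Finset.sum_filter, Finset.sum_filter, ← Finset.sum_neg_distrib]
  refine Fintype.sum_bijective X.inv (Function.Involutive.bijective X.inv_inv) _ _ fun e => ?_
  rw [X.s_inv, c.2 e]
  split_ifs <;> simp only [neg_neg, neg_zero]

lemma boundary_apply_eq_neg_two_mul (c : ↥X.C1) (v : X.V) :
    X.boundary c v = -2 * ∑ e with X.s e = v, (c : X.E →₀ ℝ) e := by
  rw [boundary_apply, sum_target_eq_neg_sum_source]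
  ring

noncomputable def starChain (v : X.V) : ↥X.C1 :=
  ∑ e, if X.s e = v then X.edgeChain e else 0

lemma chainInner_starChain_left (v : X.V) (z : ↥X.C1) :
    X.chainInner (X.starChain v) z = -(1 / 2) * X.boundary z v := by
  rw [starChain, chainInner_sum_ite_left, boundary_apply_eq_neg_two_mul]
  simp only [chainInner_edgeChain_left]
  ring

lemma chainInner_starChain_of_isCycle (v : X.V) {z : ↥X.C1} (hz : X.IsCycle z) :
    X.chainInner (X.starChain v) z = 0 := by
  rw [chainInner_starChain_left, hz, Finsupp.zero_apply, mul_zero]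

end SunadaGraph

/-- In a finite graph, for every vertex `x` the projections to
`Z₁(X,ℝ)` of the edges with source `x` sum to zero. -/
theorem sum_proj_edges_from_vertex_eq_zero (X : SunadaGraph) [Fintype X.E] [DecidableEq X.V]
    (π : ↥X.C1 → ↥X.C1) (hπ : X.IsOrthoProj π) (x : X.V) :
    (∑ e : X.E, if X.s e = x then π (X.edgeChain e) else 0) = 0 := by
  set S : ↥X.C1 := ∑ e : X.E, if X.s e = x then π (X.edgeChain e) else 0
  have hS_cycle : X.IsCycle S :=
    X.isCycle_sum _ _ fun e _ => by split_ifs; exacts [hπ.1 _, X.isCycle_zero]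
  apply X.eq_zero_of_chainInner_self_eq_zero
  calc X.chainInner S S
      = ∑ e with X.s e = x, X.chainInner (π (X.edgeChain e)) S := X.chainInner_sum_ite_left _ _ _
    _ = ∑ e with X.s e = x, X.chainInner (X.edgeChain e) S :=
        Finset.sum_congr rfl fun e _ => X.chainInner_proj_left hπ _ hS_cycle
    _ = X.chainInner (X.starChain x) S := (X.chainInner_sum_ite_left _ _ _).symm
    _ = 0 := X.chainInner_starChain_of_isCycle x hS_cycle
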